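/- arXiv:2004.11796 — 2 statements merged into one kernel-verified Lean document; each statement's English description precedes it below -/
import Mathlib

section
/- Let Ψ be a Max-2AND instance with m > 0 clauses and bias(Ψ) ≤ m/3. Then val_Ψ ≥ m/4 + bias(Ψ)²/(4(m − 2·bias(Ψ))) ≥ 2(m + bias(Ψ))/9. (Lemma 3.4.) -/
/-- A `Max-2AND` clause: the conjunction of two (not necessarily distinct) literals.
A literal on variable `i` with polarity `b` (`b = true` for `xᵢ`, `b = false` for `¬xᵢ`)
evaluates to `σ i == b`. No clause contains both `xᵢ` and `¬xᵢ`: if the two literals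
share a variable they have the same polarity. -/
structure AndClause (n : ℕ) where
  i : Fin n
  bi : Bool
  j : Fin n
  bj : Bool
  consistent : i = j → bi = bj

/-- Evaluation of an AND clause under an assignment. -/
def AndClause.eval {n : ℕ} (C : AndClause n) (σ : Fin n → Bool) : Bool :=
  (σ C.i == C.bi) && (σ C.j == C.bj)

/-- The number of clauses of `Ψ` satisfied by `σ`, i.e. `val_Ψ(σ)`. -/
def satCount {n : ℕ} (Ψ : List (AndClause n)) (σ : Fin n → Bool) : ℕ :=
  Ψ.countP (fun C => C.eval σ)

/-- `val_Ψ`: the maximum number of simultaneously satisfiable clauses. -/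
def maxVal {n : ℕ} (Ψ : List (AndClause n)) : ℕ :=
  Finset.univ.sup (fun σ : Fin n → Bool => satCount Ψ σ)

/-- `pos_i(Ψ)`: the number of occurrences of the literal `xᵢ` among the `2m`
literal occurrences of `Ψ`. -/
def posCount {n : ℕ} (Ψ : List (AndClause n)) (v : Fin n) : ℕ :=
  (Ψ.map (fun C => (if C.i = v ∧ C.bi = true then 1 else 0)
                 + (if C.j = v ∧ C.bj = true then 1 else 0))).sum

/-- `neg_i(Ψ)`: the number of occurrences of the literal `¬xᵢ`. -/
def negCount {n : ℕ} (Ψ : List (AndClause n)) (v : Fin n) : ℕ :=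
  (Ψ.map (fun C => (if C.i = v ∧ C.bi = false then 1 else 0)
                 + (if C.j = v ∧ C.bj = false then 1 else 0))).sum

/-- `bias(Ψ) = (1/2) Σᵢ |posᵢ(Ψ) − negᵢ(Ψ)|`. -/
noncomputable def bias {n : ℕ} (Ψ : List (AndClause n)) : ℝ :=
  (1/2) * ∑ v : Fin n, |(posCount Ψ v : ℝ) - (negCount Ψ v : ℝ)|

/-!
Set every variable independently to its majority polarity with probability `1/2 + ε`. A literal
then holds with probability `1/2 + ε·s`, where `s = ±1` according as it agrees with the majority,
and a clause `ℓ ∧ ℓ'` holds with probability at least the product `(1/2 + ε·s)(1/2 + ε·s')`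
(equality for distinct variables). As `(1 - s)(1 - s') ≥ 0`, the product is at least
`1/4 - ε² + (ε/2 + ε²)(s + s')`, and the signs summed over all literal occurrences give
`2·bias`. Hence some assignment satisfies at least `m/4 + ε·bias - ε²(m - 2·bias)` clauses; the
optimal `ε = bias / (2(m - 2·bias))` is at most `1/2` because `bias ≤ m/3`. The second inequality
is `(m - 5·bias)² ≥ 0`.
-/

open Finset

section ProductWeight

variable {ι α : Type*} [Fintype ι]

def productWeight (p : ι → α → ℝ) (σ : ι → α) : ℝ :=
  ∏ v, p v (σ v)

theorem productWeight_nonneg {p : ι → α → ℝ} (hp : ∀ v a, 0 ≤ p v a) (σ : ι → α) :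
    0 ≤ productWeight p σ :=
  prod_nonneg fun v _ => hp v (σ v)

variable [Fintype α] [DecidableEq ι]

theorem sum_productWeight_mul_prod (p f : ι → α → ℝ) :
    ∑ σ, productWeight p σ * ∏ v, f v (σ v) = ∏ v, ∑ a, p v a * f v a := by
  simp only [productWeight, ← prod_mul_distrib, Fintype.prod_sum]

theorem sum_productWeight {p : ι → α → ℝ} (hp : ∀ v, ∑ a, p v a = 1) :
    ∑ σ, productWeight p σ = 1 := by
  simpa [hp] using sum_productWeight_mul_prod p fun _ _ => 1

theorem sum_productWeight_mul_indicator_of_iff_agree [DecidableEq α] {p : ι → α → ℝ}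
    (hp : ∀ v, ∑ a, p v a = 1) {P : (ι → α) → Prop} [DecidablePred P] (S : Finset ι)
    (r : ι → α) (hP : ∀ σ, P σ ↔ ∀ v ∈ S, σ v = r v) :
    ∑ σ, productWeight p σ * (if P σ then 1 else 0) = ∏ v ∈ S, p v (r v) := by
  have hind : ∀ σ : ι → α, (if P σ then (1 : ℝ) else 0)
      = ∏ v, if v ∈ S → σ v = r v then 1 else 0 := by
    intro σ
    rw [prod_ite_zero]
    simp [hP]
  simp_rw [hind]
  rw [sum_productWeight_mul_prod p fun v a => if v ∈ S → a = r v then 1 else 0,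
    ← univ_inter S, ← prod_ite_mem]
  refine prod_congr rfl fun v _ => ?_
  by_cases hv : v ∈ S <;> simp [hv, hp]

theorem sum_productWeight_mul_le_sup {p : ι → α → ℝ} (hp0 : ∀ v a, 0 ≤ p v a)
    (hp : ∀ v, ∑ a, p v a = 1) (f : (ι → α) → ℕ) :
    ∑ σ, productWeight p σ * (f σ : ℝ) ≤ (univ.sup f : ℕ) :=
  calc ∑ σ, productWeight p σ * (f σ : ℝ)
      ≤ ∑ σ, productWeight p σ * (univ.sup f : ℕ) := by
        gcongr with σ
        · exact productWeight_nonneg hp0 σ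
        · exact le_sup (mem_univ σ)
    _ = (univ.sup f : ℕ) := by rw [← sum_mul, sum_productWeight hp, one_mul]

end ProductWeight

namespace AndClause

variable {n : ℕ}

theorem eval_eq_true_iff (C : AndClause n) (σ : Fin n → Bool) :
    C.eval σ = true ↔
      ∀ v ∈ ({C.i, C.j} : Finset (Fin n)), σ v = if v = C.i then C.bi else C.bj := by
  by_cases h : C.j = C.i
  · simp [eval, h, C.consistent h.symm]
  · simp [eval, h]

theorem mul_le_sum_productWeight_mul_eval {p : Fin n → Bool → ℝ} (hp0 : ∀ v b, 0 ≤ p v b)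
    (hp1 : ∀ v b, p v b ≤ 1) (hp : ∀ v, ∑ b, p v b = 1) (C : AndClause n) :
    p C.i C.bi * p C.j C.bj ≤ ∑ σ, productWeight p σ * if C.eval σ then 1 else 0 := by
  rw [sum_productWeight_mul_indicator_of_iff_agree hp _ _ C.eval_eq_true_iff]
  obtain ⟨i, bi, j, bj, hc⟩ := C
  by_cases h : i = j
  · obtain ⟨rfl, rfl⟩ : i = j ∧ bi = bj := ⟨h, hc h⟩
    simpa using mul_le_of_le_one_right (hp0 i bi) (hp1 i bi)
  · simp [prod_pair h, Ne.symm h]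

end AndClause

variable {n : ℕ}

theorem sum_mul_satCount (w : (Fin n → Bool) → ℝ) (Ψ : List (AndClause n)) :
    ∑ σ, w σ * satCount Ψ σ = (Ψ.map fun C => ∑ σ, w σ * if C.eval σ then 1 else 0).sum := by
  induction Ψ with
  | nil => simp [satCount]
  | cons C Ψ ih =>
    simp only [satCount] at ih ⊢
    simp only [List.countP_cons, List.map_cons, List.sum_cons, ← ih, ← sum_add_distrib]
    refine sum_congr rfl fun σ _ => ?_
    split_ifs <;> push_cast <;> ring

theorem sum_map_add_eq_sum_posCount_negCount (Ψ : List (AndClause n)) (t : Fin n → Bool → ℝ) :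
    (Ψ.map fun C => t C.i C.bi + t C.j C.bj).sum =
      ∑ v, (t v true * posCount Ψ v + t v false * negCount Ψ v) := by
  induction Ψ with
  | nil => simp [posCount, negCount]
  | cons C Ψ ih =>
    have hC : t C.i C.bi + t C.j C.bj =
        ∑ v, (t v true * ((if C.i = v ∧ C.bi = true then 1 else 0)
                + (if C.j = v ∧ C.bj = true then 1 else 0) : ℕ)
              + t v false * ((if C.i = v ∧ C.bi = false then 1 else 0)
                + (if C.j = v ∧ C.bj = false then 1 else 0) : ℕ)) := by
      cases C.bi <;> cases C.bj <;> simp [mul_add, sum_add_distrib, add_comm]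
    simp only [posCount, negCount, List.map_cons, List.sum_cons] at ih ⊢
    rw [ih, hC, ← sum_add_distrib]
    refine sum_congr rfl fun v _ => ?_
    push_cast
    ring

def majority (Ψ : List (AndClause n)) (v : Fin n) : Bool :=
  decide (negCount Ψ v ≤ posCount Ψ v)

def litSign (Ψ : List (AndClause n)) (v : Fin n) (b : Bool) : ℝ :=
  if b = majority Ψ v then 1 else -1

theorem litSign_eq_one_or_neg_one (Ψ : List (AndClause n)) (v : Fin n) (b : Bool) :
    litSign Ψ v b = 1 ∨ litSign Ψ v b = -1 := by
  unfold litSign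
  split_ifs <;> simp

theorem litSign_true_add_litSign_false (Ψ : List (AndClause n)) (v : Fin n) :
    litSign Ψ v true + litSign Ψ v false = 0 := by
  unfold litSign
  cases majority Ψ v <;> norm_num

theorem sum_map_litSign (Ψ : List (AndClause n)) :
    (Ψ.map fun C => litSign Ψ C.i C.bi + litSign Ψ C.j C.bj).sum = 2 * bias Ψ := by
  rw [sum_map_add_eq_sum_posCount_negCount, bias, ← mul_assoc, mul_one_div_cancel two_ne_zero,
    one_mul]
  refine sum_congr rfl fun v _ => ?_
  by_cases h : negCount Ψ v ≤ posCount Ψ v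
  · have h' : (negCount Ψ v : ℝ) ≤ posCount Ψ v := by exact_mod_cast h
    have hs : litSign Ψ v true = 1 ∧ litSign Ψ v false = -1 := by simp [litSign, majority, h]
    rw [hs.1, hs.2, abs_of_nonneg (sub_nonneg.2 h')]
    ring
  · have h' : (posCount Ψ v : ℝ) < negCount Ψ v := by exact_mod_cast not_le.1 h
    have hs : litSign Ψ v true = -1 ∧ litSign Ψ v false = 1 := by simp [litSign, majority, h]
    rw [hs.1, hs.2, abs_of_neg (sub_neg.2 h')]
    ring

theorem bias_nonneg (Ψ : List (AndClause n)) : 0 ≤ bias Ψ := by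
  unfold bias
  positivity

theorem quarter_sub_sq_add_mul_le_mul (ε : ℝ) {s t : ℝ} (hs : s ≤ 1) (ht : t ≤ 1) :
    1 / 4 - ε ^ 2 + (ε / 2 + ε ^ 2) * (s + t) ≤ (1 / 2 + ε * s) * (1 / 2 + ε * t) := by
  nlinarith [mul_nonneg (sq_nonneg ε) (mul_nonneg (sub_nonneg.2 hs) (sub_nonneg.2 ht))]

theorem le_maxVal_of_nonneg_of_le_half (Ψ : List (AndClause n)) {ε : ℝ} (hε0 : 0 ≤ ε)
    (hε1 : ε ≤ 1 / 2) :
    (Ψ.length : ℝ) / 4 + ε * bias Ψ - ε ^ 2 * (Ψ.length - 2 * bias Ψ) ≤ maxVal Ψ := by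
  set p : Fin n → Bool → ℝ := fun v b => 1 / 2 + ε * litSign Ψ v b
  have hp0 : ∀ v b, 0 ≤ p v b := fun v b => by
    rcases litSign_eq_one_or_neg_one Ψ v b with h | h <;> simp only [p, h] <;> linarith
  have hp1 : ∀ v b, p v b ≤ 1 := fun v b => by
    rcases litSign_eq_one_or_neg_one Ψ v b with h | h <;> simp only [p, h] <;> linarith
  have hp : ∀ v, ∑ b, p v b = 1 := fun v => by
    rw [Fintype.sum_bool]
    linear_combination ε * litSign_true_add_litSign_false Ψ v
  have hsign : ∀ v b, litSign Ψ v b ≤ 1 := fun v b => by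
    rcases litSign_eq_one_or_neg_one Ψ v b with h | h <;> norm_num [h]
  calc (Ψ.length : ℝ) / 4 + ε * bias Ψ - ε ^ 2 * (Ψ.length - 2 * bias Ψ)
      = (Ψ.map fun C => 1 / 4 - ε ^ 2 +
          (ε / 2 + ε ^ 2) * (litSign Ψ C.i C.bi + litSign Ψ C.j C.bj)).sum := by
        rw [List.sum_map_add, List.sum_map_mul_left, sum_map_litSign]
        simp only [List.map_const', List.sum_replicate, nsmul_eq_mul]
        ring
    _ ≤ (Ψ.map fun C => p C.i C.bi * p C.j C.bj).sum :=
        List.sum_le_sum fun C _ => quarter_sub_sq_add_mul_le_mul ε (hsign _ _) (hsign _ _)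
    _ ≤ (Ψ.map fun C => ∑ σ, productWeight p σ * if C.eval σ then 1 else 0).sum :=
        List.sum_le_sum fun C _ => C.mul_le_sum_productWeight_mul_eval hp0 hp1 hp
    _ = ∑ σ, productWeight p σ * satCount Ψ σ := (sum_mul_satCount _ Ψ).symm
    _ ≤ maxVal Ψ := sum_productWeight_mul_le_sup hp0 hp _

theorem two_mul_add_div_nine_le {m B : ℝ} (h : 0 < m - 2 * B) :
    2 * (m + B) / 9 ≤ m / 4 + B ^ 2 / (4 * (m - 2 * B)) := by
  rw [div_add_div _ _ four_ne_zero (by positivity), div_le_div_iff₀ (by norm_num) (by positivity)]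
  nlinarith [sq_nonneg (m - 5 * B)]

/-- Lemma 3.4: if `bias(Ψ) ≤ m/3` then
`val_Ψ ≥ m/4 + bias(Ψ)²/(4(m − 2·bias(Ψ))) ≥ 2(m + bias(Ψ))/9`. -/
theorem and_bias_lower_bound {n : ℕ} (Ψ : List (AndClause n))
    (hm : 0 < Ψ.length) (hb : bias Ψ ≤ (Ψ.length : ℝ) / 3) :
    (Ψ.length : ℝ) / 4 + (bias Ψ) ^ 2 / (4 * ((Ψ.length : ℝ) - 2 * bias Ψ)) ≤ (maxVal Ψ : ℝ) ∧
    2 * ((Ψ.length : ℝ) + bias Ψ) / 9 ≤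
      (Ψ.length : ℝ) / 4 + (bias Ψ) ^ 2 / (4 * ((Ψ.length : ℝ) - 2 * bias Ψ)) := by
  set m : ℝ := (Ψ.length : ℝ)
  set B := bias Ψ
  have hB : 0 ≤ B := bias_nonneg Ψ
  have hd : 0 < m - 2 * B := by
    have : (0 : ℝ) < m := Nat.cast_pos.2 hm
    linarith
  set ε := B / (2 * (m - 2 * B))
  have hε : ε ≤ 1 / 2 := by
    rw [div_le_iff₀ (by positivity)]
    linarith
  have hopt : ε * B - ε ^ 2 * (m - 2 * B) = B ^ 2 / (4 * (m - 2 * B)) := by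
    simp only [ε]
    field_simp
    ring
  refine ⟨?_, two_mul_add_div_nine_le hd⟩
  linarith [le_maxVal_of_nonneg_of_le_half Ψ (by positivity : 0 ≤ ε) hε]
end

section
/- Let k ≥ 2, let m_1,…,m_k ≥ 0 be real numbers with D = Σ_{j=2}^k ((2^j − j − 1)/2^{j−2})·m_j > 0, and let B be a real number with 0 ≤ B ≤ Σ_{j=1}^k ((2 − j)/2^{j−1})·m_j. Then Σ_{j=1}^k (1 − 2^{−j})·m_j + B²/(4D) ≥ (√2/2)·( B/2 + Σ_{j=1}^k ((2^j + j − 2)/2^j)·m_j ). (Claim 6.4.) -/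
/-!
With `s = √2` and `c = (s - 1)/2`, completing the square gives `B²/(4D) ≥ c B - c² D`.
The remaining coefficient of `B` is `c - s/4 = (s - 2)/4 < 0`, so `B` may be replaced by its upper
bound. What is left is a combination of the four sums whose `j`-th coefficient equals
`(3√2 - 4)(2^j - 2j)/2^(j+1) ≥ 0`.
-/

lemma mul_sub_sq_mul_le_sq_div_four_mul {K : Type*} [Field K] [LinearOrder K]
    [IsStrictOrderedRing K] (B c D : K) (hD : 0 < D) : c * B - c ^ 2 * D ≤ B ^ 2 / (4 * D) := by
  rw [le_div_iff₀ (by positivity)]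
  nlinarith [sq_nonneg (B - 2 * c * D)]

lemma coeff_combination_eq (s : ℝ) (hs : s ^ 2 = 2) {j : ℕ} (hj : 1 ≤ j) :
    (1 - 1 / (2 : ℝ) ^ j) + (s - 2) / 4 * (((2 : ℝ) - j) / 2 ^ (j - 1))
      - ((s - 1) / 2) ^ 2 * (((2 : ℝ) ^ j - j - 1) / 2 ^ (j - 2))
      - s / 2 * (((2 : ℝ) ^ j + j - 2) / 2 ^ j)
      = (3 * s - 4) * (2 ^ j - 2 * j) / 2 ^ (j + 1) := by
  obtain _ | _ | i := j
  · omega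
  · norm_num
    ring
  · simp only [show i + 1 + 1 - 1 = i + 1 by omega, show i + 1 + 1 - 2 = i by omega,
      Nat.cast_add, pow_succ]
    field_simp
    linear_combination 8 * (3 + (i : ℝ) - 4 * 2 ^ i) * hs

lemma coeff_combination_nonneg {j : ℕ} (hj : 1 ≤ j) :
    0 ≤ (1 - 1 / (2 : ℝ) ^ j) + (√2 - 2) / 4 * (((2 : ℝ) - j) / 2 ^ (j - 1))
      - ((√2 - 1) / 2) ^ 2 * (((2 : ℝ) ^ j - j - 1) / 2 ^ (j - 2))
      - √2 / 2 * (((2 : ℝ) ^ j + j - 2) / 2 ^ j) := by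
  have hs : √2 ^ 2 = 2 := Real.sq_sqrt zero_le_two
  rw [coeff_combination_eq _ hs hj]
  have h3s : 4 ≤ 3 * √2 := by nlinarith [Real.sqrt_nonneg 2]
  have hpow : 2 * j ≤ 2 ^ j := by
    have := Nat.lt_two_pow_self (n := j - 1)
    calc 2 * j ≤ 2 * 2 ^ (j - 1) := by omega
      _ = 2 ^ j := by rw [← pow_succ', Nat.sub_add_cancel hj]
  have hpow' : (2 * j : ℝ) ≤ 2 ^ j := by exact_mod_cast hpow
  apply div_nonneg _ (by positivity)
  exact mul_nonneg (by linarith) (by linarith)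

lemma sum_Icc_one_eq_sum_Icc_two (k : ℕ) (m : ℕ → ℝ) :
    ∑ j ∈ Finset.Icc 1 k, (((2 : ℝ) ^ j - j - 1) / 2 ^ (j - 2)) * m j
      = ∑ j ∈ Finset.Icc 2 k, (((2 : ℝ) ^ j - j - 1) / 2 ^ (j - 2)) * m j := by
  refine (Finset.sum_subset (Finset.Icc_subset_Icc_left one_le_two) fun j hj hj2 => ?_).symm
  obtain rfl : j = 1 := by simp only [Finset.mem_Icc] at hj hj2; omega
  norm_num

theorem claim_6_4_general (k : ℕ) (m : ℕ → ℝ)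
    (hm : ∀ j ∈ Finset.Icc 1 k, 0 ≤ m j) (B D : ℝ)
    (hD : D = ∑ j ∈ Finset.Icc 2 k, (((2 : ℝ) ^ j - (j : ℝ) - 1) / 2 ^ (j - 2)) * m j)
    (hDpos : 0 < D)
    (hB1 : B ≤ ∑ j ∈ Finset.Icc 1 k, (((2 : ℝ) - (j : ℝ)) / 2 ^ (j - 1)) * m j) :
    Real.sqrt 2 / 2 *
        (B / 2 + ∑ j ∈ Finset.Icc 1 k, (((2 : ℝ) ^ j + (j : ℝ) - 2) / 2 ^ j) * m j) ≤
      ∑ j ∈ Finset.Icc 1 k, (1 - 1 / (2 : ℝ) ^ j) * m j + B ^ 2 / (4 * D) := by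
  have hsquare := mul_sub_sq_mul_le_sq_div_four_mul B ((√2 - 1) / 2) D hDpos
  have hB : (√2 - 2) / 4 * ∑ j ∈ Finset.Icc 1 k, (((2 : ℝ) - j) / 2 ^ (j - 1)) * m j
      ≤ (√2 - 2) / 4 * B :=
    mul_le_mul_of_nonpos_left hB1 (by nlinarith [Real.sq_sqrt (zero_le_two (α := ℝ))])
  have hsum : 0 ≤ ∑ j ∈ Finset.Icc 1 k, (1 - 1 / (2 : ℝ) ^ j) * m j
      + (√2 - 2) / 4 * ∑ j ∈ Finset.Icc 1 k, (((2 : ℝ) - j) / 2 ^ (j - 1)) * m j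
      - ((√2 - 1) / 2) ^ 2 *
          ∑ j ∈ Finset.Icc 1 k, (((2 : ℝ) ^ j - j - 1) / 2 ^ (j - 2)) * m j
      - √2 / 2 * ∑ j ∈ Finset.Icc 1 k, (((2 : ℝ) ^ j + j - 2) / 2 ^ j) * m j := by
    simp only [Finset.mul_sum, ← Finset.sum_add_distrib, ← Finset.sum_sub_distrib]
    refine Finset.sum_nonneg fun j hj => ?_
    have := mul_nonneg (coeff_combination_nonneg (Finset.mem_Icc.mp hj).1) (hm j hj)
    linarith
  rw [sum_Icc_one_eq_sum_Icc_two, ← hD] at hsum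
  linarith

/-- Claim 6.4: for `k ≥ 2`, nonnegative reals `m_1, …, m_k` with
`D = Σ_{j=2}^k ((2^j − j − 1)/2^{j−2})·m_j > 0`, and
`0 ≤ B ≤ Σ_{j=1}^k ((2 − j)/2^{j−1})·m_j`, we have
`Σ_{j=1}^k (1 − 2^{−j})·m_j + B²/(4D) ≥ (√2/2)·(B/2 + Σ_{j=1}^k ((2^j + j − 2)/2^j)·m_j)`. -/
theorem claim_6_4 (k : ℕ) (hk : 2 ≤ k) (m : ℕ → ℝ)
    (hm : ∀ j ∈ Finset.Icc 1 k, 0 ≤ m j) (B D : ℝ)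
    (hD : D = ∑ j ∈ Finset.Icc 2 k, (((2 : ℝ) ^ j - (j : ℝ) - 1) / 2 ^ (j - 2)) * m j)
    (hDpos : 0 < D) (hB0 : 0 ≤ B)
    (hB1 : B ≤ ∑ j ∈ Finset.Icc 1 k, (((2 : ℝ) - (j : ℝ)) / 2 ^ (j - 1)) * m j) :
    Real.sqrt 2 / 2 *
        (B / 2 + ∑ j ∈ Finset.Icc 1 k, (((2 : ℝ) ^ j + (j : ℝ) - 2) / 2 ^ j) * m j) ≤
      ∑ j ∈ Finset.Icc 1 k, (1 - 1 / (2 : ℝ) ^ j) * m j + B ^ 2 / (4 * D) :=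
  claim_6_4_general k m hm B D hD hDpos hB1
end
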